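/- arXiv:1710.09955 — 2 statements merged into one kernel-verified Lean document; each statement's English description precedes it below -/
import Mathlib

section
/- Every automorphism of the graph G fixes the base edge, i.e., maps the set {A₀, A₁} to itself. -/
/-- The graph `G = K₆ \ K₄`: vertices `0, 1` are the base vertices `A₀, A₁`,
vertices `2,…,5` are `B₁,…,B₄`; every pair of vertices is adjacent except
pairs among `{2,3,4,5}`. -/
def G : SimpleGraph (Fin 6) where
  Adj a b := a ≠ b ∧ (a.val < 2 ∨ b.val < 2)
  symm := ⟨fun a b h => ⟨h.1.symm, h.2.symm⟩⟩
  loopless := ⟨fun a h => h.1 rfl⟩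

lemma adj_iff (v w : Fin 6) : G.Adj v w ↔ v ≠ w ∧ (v.val < 2 ∨ w.val < 2) := Iff.rfl

lemma key_iff : ∀ v : Fin 6, v.val < 2 ↔ ∀ w, w ≠ v → G.Adj v w := by
  simp only [adj_iff]; decide

lemma pres (φ : G ≃g G) (v : Fin 6) (hv : v.val < 2) : (φ v).val < 2 := by
  rw [key_iff] at *
  intro w hw
  have : φ (φ.symm w) = w := φ.apply_symm_apply w
  rw [← this]
  refine (φ.map_adj_iff).2 (hv _ ?_)
  intro h
  apply hw
  rw [← this, h]

/-- Every automorphism of `G` maps the set `{A₀, A₁}` to itself. -/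
theorem stmt0 (φ : G ≃g G) :
    (fun v => φ v) '' ({0, 1} : Set (Fin 6)) = {0, 1} := by
  have h0 : (φ 0).val < 2 := pres φ 0 (by norm_num)
  have h1 : (φ 1).val < 2 := pres φ 1 (by norm_num)
  have hne : φ 0 ≠ φ 1 := fun h => by simpa using φ.injective h
  have mem : ∀ a : Fin 6, a ∈ ({0, 1} : Set (Fin 6)) ↔ a.val < 2 := by
    intro a; simp [Set.mem_insert_iff]; omega
  ext x
  simp only [Set.mem_image, Set.mem_insert_iff, Set.mem_singleton_iff]
  constructor
  · rintro ⟨v, (rfl | rfl), rfl⟩ <;> [skip; skip] <;>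
      first
        | (have := h0; omega)
        | (have := h1; omega)
  · intro hx
    -- {φ 0, φ 1} = {0, 1} since both in {0,1} and distinct
    have e0 : φ 0 = 0 ∨ φ 0 = 1 := by
      have := (mem (φ 0)).2 h0; simpa [Set.mem_insert_iff] using this
    have e1 : φ 1 = 0 ∨ φ 1 = 1 := by
      have := (mem (φ 1)).2 h1; simpa [Set.mem_insert_iff] using this
    rcases e0 with e0 | e0 <;> rcases e1 with e1 | e1 <;>
      rcases hx with rfl | rfl <;>
      first
        | exact ⟨0, Or.inl rfl, e0⟩
        | exact ⟨1, Or.inr rfl, e1⟩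
        | (exfalso; apply hne; rw [e0, e1])
end

section
/- If a set F of edges contains two triangles, one through vertex A₀ avoiding A₁ and one through vertex A₁ avoiding A₀, such that F contains at most 5 edges total among these configurations and both triangles consist only of these edges, then the two triangles share an edge, and hence F contains a 2Δ-configuration for A₀A₁: there exist vertices X₁, X₂ ∉ {A₀,A₁} with all of A₀X₁, A₀X₂, A₁X₁, A₁X₂, X₁X₂ in F. -/
private lemma stmt8_aux {V : Type*} [DecidableEq V] (A₀ A₁ T₁ T₂ S₁ S₂ : V) (hA : A₀ ≠ A₁)
    (hT : T₁ ≠ T₂) (hS : S₁ ≠ S₂)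
    (hT1 : T₁ ≠ A₀ ∧ T₁ ≠ A₁) (hT2 : T₂ ≠ A₀ ∧ T₂ ≠ A₁)
    (hS1 : S₁ ≠ A₀ ∧ S₁ ≠ A₁) (hS2 : S₂ ≠ A₀ ∧ S₂ ≠ A₁)
    (hne : s(T₁, T₂) ≠ s(S₁, S₂)) :
    ({s(A₀, T₁), s(A₀, T₂), s(T₁, T₂), s(A₁, S₁), s(A₁, S₂), s(S₁, S₂)} :
        Finset (Sym2 V)).card = 6 := by
  rw [Ne, Sym2.eq_iff] at hne
  have h1 : s(A₀, T₁) ∉ ({s(A₀, T₂), s(T₁, T₂), s(A₁, S₁), s(A₁, S₂), s(S₁, S₂)} :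
      Finset (Sym2 V)) := by
    simp only [Finset.mem_insert, Finset.mem_singleton, Sym2.eq_iff, not_or]
    clear hne; push_neg; tauto
  have h2 : s(A₀, T₂) ∉ ({s(T₁, T₂), s(A₁, S₁), s(A₁, S₂), s(S₁, S₂)} :
      Finset (Sym2 V)) := by
    simp only [Finset.mem_insert, Finset.mem_singleton, Sym2.eq_iff, not_or]
    clear hne; push_neg; tauto
  have h3 : s(T₁, T₂) ∉ ({s(A₁, S₁), s(A₁, S₂), s(S₁, S₂)} : Finset (Sym2 V)) := by
    simp only [Finset.mem_insert, Finset.mem_singleton, Sym2.eq_iff]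
    rintro (h | h | h)
    · clear hne; tauto
    · clear hne; tauto
    · exact hne h
  have h4 : s(A₁, S₁) ∉ ({s(A₁, S₂), s(S₁, S₂)} : Finset (Sym2 V)) := by
    simp only [Finset.mem_insert, Finset.mem_singleton, Sym2.eq_iff, not_or]
    clear hne; push_neg; tauto
  have h5 : s(A₁, S₂) ∉ ({s(S₁, S₂)} : Finset (Sym2 V)) := by
    simp only [Finset.mem_singleton, Sym2.eq_iff, not_or]
    clear hne; push_neg; tauto
  rw [Finset.card_insert_of_notMem h1, Finset.card_insert_of_notMem h2,
    Finset.card_insert_of_notMem h3, Finset.card_insert_of_notMem h4,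
    Finset.card_insert_of_notMem h5, Finset.card_singleton]

/-- If an edge set `F` contains a triangle through `A₀` avoiding `A₁` and a
triangle through `A₁` avoiding `A₀`, and these two triangles span at most 5 edges
in total, then the two triangles share an edge and hence `F` contains a
2Δ-configuration for `A₀A₁`. -/
theorem stmt8 {V : Type*} [DecidableEq V] (A₀ A₁ : V) (hA : A₀ ≠ A₁)
    (F : Set (Sym2 V)) (T₁ T₂ S₁ S₂ : V)
    (hT : T₁ ≠ T₂) (hS : S₁ ≠ S₂)
    (hTA : T₁ ∉ ({A₀, A₁} : Set V) ∧ T₂ ∉ ({A₀, A₁} : Set V))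
    (hSA : S₁ ∉ ({A₀, A₁} : Set V) ∧ S₂ ∉ ({A₀, A₁} : Set V))
    (ht : s(A₀, T₁) ∈ F ∧ s(A₀, T₂) ∈ F ∧ s(T₁, T₂) ∈ F)
    (hs : s(A₁, S₁) ∈ F ∧ s(A₁, S₂) ∈ F ∧ s(S₁, S₂) ∈ F)
    (hcard : ({s(A₀, T₁), s(A₀, T₂), s(T₁, T₂), s(A₁, S₁), s(A₁, S₂), s(S₁, S₂)} :
        Finset (Sym2 V)).card ≤ 5) :
    s(T₁, T₂) = s(S₁, S₂) ∧
      ∃ X₁ X₂ : V, X₁ ≠ X₂ ∧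
        X₁ ∉ ({A₀, A₁} : Set V) ∧ X₂ ∉ ({A₀, A₁} : Set V) ∧
        s(A₀, X₁) ∈ F ∧ s(A₀, X₂) ∈ F ∧ s(A₁, X₁) ∈ F ∧ s(A₁, X₂) ∈ F ∧
        s(X₁, X₂) ∈ F := by
  have hT1 := hTA.1
  have hT2 := hTA.2
  have hS1 := hSA.1
  have hS2 := hSA.2
  simp only [Set.mem_insert_iff, Set.mem_singleton_iff, not_or] at hT1 hT2 hS1 hS2
  have key : s(T₁, T₂) = s(S₁, S₂) := by
    by_contra hne
    rw [stmt8_aux A₀ A₁ T₁ T₂ S₁ S₂ hA hT hS hT1 hT2 hS1 hS2 hne] at hcard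
    omega
  refine ⟨key, T₁, T₂, hT, hTA.1, hTA.2, ht.1, ht.2.1, ?_, ?_, ht.2.2⟩ <;>
  · rw [Sym2.eq_iff] at key
    rcases key with ⟨h1, h2⟩ | ⟨h1, h2⟩ <;> subst h1 <;> subst h2 <;> tauto
end
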